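/- Let Φ = (G, 𝕋, φ) be a complex unit gain graph, where G is a connected bipartite graph with at least two vertices. If 𝓔(Φ) = 2μ(G), then G is a regular complete bipartite graph, i.e., G is isomorphic to K_{n,n} for some n ≥ 1. -/

import Mathlib

open Matrix

variable {V : Type*}

/-- A gain function on `G` with values in the circle group `𝕋 ⊆ ℂ`:
each ordered pair of adjacent vertices gets a unit complex number, and
reversing the pair inverts the gain. -/
structure IsGain (G : SimpleGraph V) (φ : V → V → ℂ) : Prop where
  unit : ∀ u v, G.Adj u v → ‖φ u v‖ = 1
  inv : ∀ u v, G.Adj u v → φ v u = (φ u v)⁻¹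

/-- The adjacency matrix of the complex unit gain graph `(G, 𝕋, φ)`. -/
noncomputable def gainAdj (G : SimpleGraph V) (φ : V → V → ℂ) : Matrix V V ℂ :=
  fun u v => @ite _ (G.Adj u v) (Classical.dec _) (φ u v) 0

theorem IsGain.isHermitian {G : SimpleGraph V} {φ : V → V → ℂ} (hg : IsGain G φ) :
    (gainAdj G φ).IsHermitian := by
  ext u v
  simp only [conjTranspose_apply, gainAdj]
  by_cases h : G.Adj u v
  · rw [if_pos h.symm, if_pos h, hg.inv u v h, Complex.inv_eq_conj (hg.unit u v h)]
    simp
  · rw [if_neg (fun h' => h h'.symm), if_neg h]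
    simp

/-- The energy of a complex unit gain graph: the sum of the absolute values of the
eigenvalues of its (Hermitian) adjacency matrix. -/
noncomputable def gainEnergy [Fintype V] [DecidableEq V] (G : SimpleGraph V) (φ : V → V → ℂ)
    (hg : IsGain G φ) : ℝ :=
  ∑ i, |hg.isHermitian.eigenvalues i|

/-- `M` is a matching of `G`: a set of edges of `G`, pairwise sharing no vertex. -/
def IsGraphMatching (G : SimpleGraph V) (M : Finset (Sym2 V)) : Prop :=
  (↑M : Set (Sym2 V)) ⊆ G.edgeSet ∧
    ∀ e ∈ M, ∀ f ∈ M, e ≠ f → ∀ v : V, v ∈ e → v ∉ f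

/-- The matching number of `G`: the largest size of a matching. -/
noncomputable def matchingNumber (G : SimpleGraph V) : ℕ :=
  sSup {n | ∃ M : Finset (Sym2 V), IsGraphMatching G M ∧ M.card = n}

/-- The gain of a walk: the product of the gains along its darts. -/
def walkGain {G : SimpleGraph V} (φ : V → V → ℂ) {u v : V} (w : G.Walk u v) : ℂ :=
  (w.darts.map fun d => φ d.toProd.1 d.toProd.2).prod

/-- A complex unit gain graph is balanced if every cycle has gain `1`. -/
def IsBalanced (G : SimpleGraph V) (φ : V → V → ℂ) : Prop :=
  ∀ (v : V) (w : G.Walk v v), w.IsCycle → walkGain φ w = 1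

theorem IsGain.anti {G H : SimpleGraph V} {φ : V → V → ℂ} (hg : IsGain G φ) (hle : H ≤ G) :
    IsGain H φ :=
  ⟨fun u v h => hg.unit u v (hle h), fun u v h => hg.inv u v (hle h)⟩

theorem IsGain.induce {G : SimpleGraph V} {φ : V → V → ℂ} (hg : IsGain G φ) (s : Set V) :
    IsGain (G.induce s) (fun a b => φ a b) :=
  ⟨fun u v h => hg.unit u v h, fun u v h => hg.inv u v h⟩


/-!
Let `σ` be the involution exchanging the ends of the edges of a maximum matching, and `B` the
unitary matrix carrying the gains `φ u (σ u)` of these edges (and `1` at unmatched vertices).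
Then `tr (A B)` counts the matched vertices, so `Re tr (A B) = 2 μ(G) = 𝓔(Φ)`. Writing
`A = W D W*`, `tr (A B) = ∑ dᵢ Cᵢᵢ` for the unitary `C = W* B W`, which is at most `∑ |dᵢ|`;
equality forces `D C = |D|`, so `P = A B = W |D| W*` is positive semidefinite. A positive
semidefinite matrix with a zero diagonal entry has a zero column, which makes the matching
perfect; then `P` has unit diagonal and `‖P x (σ y)‖ = 1` exactly when `x ∼ y`. Two columns of
such a matrix joined by an entry of modulus one have equal moduli, so every path
`a ∼ b ∼ c ∼ d` closes up to `a ∼ d`, and a connected bipartite graph with this property is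
complete bipartite; the perfect matching makes its two sides equal.
-/

open scoped ComplexOrder

namespace RCLike
variable {𝕜 : Type*} [RCLike 𝕜]

lemma mul_re_le_abs (r : ℝ) {z : 𝕜} (hz : ‖z‖ ≤ 1) : r * re z ≤ |r| :=
  calc r * re z ≤ |r| * |re z| := (le_abs_self _).trans (abs_mul _ _).le
    _ ≤ |r| * ‖z‖ := mul_le_mul_of_nonneg_left (abs_re_le_norm z) (abs_nonneg r)
    _ ≤ |r| := mul_le_of_le_one_right (abs_nonneg r) hz

lemma ofReal_mul_eq_abs_of_mul_re_eq_abs {r : ℝ} {z : 𝕜} (hz : ‖z‖ ≤ 1)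
    (h : r * re z = |r|) : (r : 𝕜) * z = |r| := by
  rcases eq_or_ne r 0 with rfl | hr
  · simp
  have hre : |re z| = 1 := by
    have h1 : |r| * |re z| = |r| * 1 := by rw [← abs_mul, h, abs_abs, mul_one]
    exact mul_left_cancel₀ (abs_ne_zero.mpr hr) h1
  have him : im z = 0 := by
    have hsq := RCLike.norm_sq_eq_def (K := 𝕜) (z := z)
    have h1 : re z ^ 2 = 1 := by rw [← sq_abs, hre, one_pow]
    nlinarith [sq_nonneg (im z), norm_nonneg z]
  rw [← re_add_im z, him, ofReal_zero, zero_mul, add_zero, ← ofReal_mul, h]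

end RCLike

namespace Matrix
variable {𝕜 n : Type*} [RCLike 𝕜] [Fintype n] [DecidableEq n]

lemma sum_norm_sq_apply_of_mem_unitaryGroup {U : Matrix n n 𝕜} (hU : U ∈ unitaryGroup n 𝕜)
    (i : n) : ∑ j, ‖U i j‖ ^ 2 = 1 := by
  have h := congrFun (congrFun (mem_unitaryGroup_iff.mp hU) i) i
  simp only [mul_apply, star_apply, RCLike.star_def, RCLike.mul_conj, one_apply_eq] at h
  exact_mod_cast h

lemma apply_eq_zero_of_norm_apply_eq_one {U : Matrix n n 𝕜} (hU : U ∈ unitaryGroup n 𝕜)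
    {i j k : n} (hk : ‖U i k‖ = 1) (hj : j ≠ k) : U i j = 0 := by
  have h := sum_norm_sq_apply_of_mem_unitaryGroup hU i
  rw [← Finset.add_sum_erase _ _ (Finset.mem_univ k), hk, one_pow, add_eq_left,
    Finset.sum_eq_zero_iff_of_nonneg (fun _ _ => sq_nonneg _)] at h
  simpa using h j (Finset.mem_erase.mpr ⟨hj, Finset.mem_univ j⟩)

namespace IsHermitian
variable {A : Matrix n n 𝕜} (hA : A.IsHermitian)

lemma trace_mul_eq_sum_eigenvalues_mul (U : Matrix n n 𝕜) :
    (A * U).trace = ∑ i, (hA.eigenvalues i : 𝕜) *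
      (star (hA.eigenvectorUnitary : Matrix n n 𝕜) * U * hA.eigenvectorUnitary) i i := by
  conv_lhs => rw [hA.spectral_theorem, Unitary.conjStarAlgAut_apply, Matrix.mul_assoc,
    Matrix.mul_assoc, trace_mul_comm]
  simp only [Matrix.mul_assoc, trace, diag_apply, diagonal_mul, Function.comp_apply]

/-- The equality case of `Re tr (A U) ≤ ∑ |λᵢ(A)|`: then `A U` is the absolute value of `A`. -/
lemma posSemidef_mul_of_re_trace_mul_eq {U : Matrix n n 𝕜} (hU : U ∈ unitaryGroup n 𝕜)
    (h : RCLike.re (A * U).trace = ∑ i, |hA.eigenvalues i|) : (A * U).PosSemidef := by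
  set W : Matrix n n 𝕜 := (hA.eigenvectorUnitary : Matrix n n 𝕜)
  set d := hA.eigenvalues
  set C := star W * U * W with hC
  have hA' : A = W * diagonal (RCLike.ofReal ∘ d) * star W := hA.spectral_theorem
  have hCu : C ∈ unitaryGroup n 𝕜 :=
    mul_mem (mul_mem (Unitary.star_mem hA.eigenvectorUnitary.2) hU) hA.eigenvectorUnitary.2
  have hCii i : (d i : 𝕜) * C i i = |d i| := by
    have hle i := RCLike.mul_re_le_abs (d i) (entry_norm_bound_of_unitary hCu i i)
    rw [hA.trace_mul_eq_sum_eigenvalues_mul, map_sum] at h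
    simp only [RCLike.re_ofReal_mul] at h
    exact RCLike.ofReal_mul_eq_abs_of_mul_re_eq_abs (entry_norm_bound_of_unitary hCu i i)
      ((Finset.sum_eq_sum_iff_of_le fun i _ => hle i).mp h i (Finset.mem_univ i))
  have hDC : diagonal (RCLike.ofReal ∘ d) * C = diagonal fun i => ((|d i| : ℝ) : 𝕜) := by
    ext i j
    rw [diagonal_mul, diagonal_apply]
    split_ifs with hij
    · subst hij; exact hCii i
    rcases eq_or_ne (d i) 0 with h0 | h0
    · simp [h0]
    have hnorm : ‖C i i‖ = 1 := by
      have := congrArg norm (hCii i)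
      simpa [norm_mul, h0] using this
    rw [apply_eq_zero_of_norm_apply_eq_one hCu hnorm (Ne.symm hij), mul_zero]
  have hAU : A * U = W * diagonal (fun i => ((|d i| : ℝ) : 𝕜)) * star W := by
    have hWW : W * star W = 1 := Unitary.mul_star_self_of_mem hA.eigenvectorUnitary.2
    rw [← hDC, hC, hA']
    simp only [Matrix.mul_assoc, hWW, Matrix.mul_one]
  rw [hAU, star_eq_conjTranspose]
  exact (PosSemidef.diagonal fun i => by simp).mul_mul_conjTranspose_same W

end IsHermitian

namespace PosSemidef
variable {P : Matrix n n 𝕜}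

lemma apply_eq_zero_of_diag_eq_zero (hP : P.PosSemidef) {i : n} (hi : P i i = 0) (j : n) :
    P j i = 0 := by
  have h := (hP.dotProduct_mulVec_zero_iff (Pi.single i 1)).mp (by simp [hi])
  simpa using congrFun h j

lemma norm_apply_eq_of_norm_apply_eq_one (hP : P.PosSemidef) {i j : n} (hi : P i i = 1)
    (hj : P j j = 1) (hij : ‖P i j‖ = 1) (k : n) : ‖P k i‖ = ‖P k j‖ := by
  have hji : P j i = starRingEnd 𝕜 (P i j) := (hP.isHermitian.apply j i).symm
  have hs : starRingEnd 𝕜 (P i j) * P i j = 1 := by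
    rw [RCLike.conj_mul, hij]; simp
  -- `P i j • eᵢ - eⱼ` is isotropic for `P`, hence in its kernel.
  have h := (hP.dotProduct_mulVec_zero_iff (P i j • Pi.single i 1 - Pi.single j 1)).mp (by
    simp only [mulVec_sub, mulVec_smul, sub_dotProduct, dotProduct_sub, star_sub, star_smul,
      smul_dotProduct, dotProduct_smul, mulVec_single_one]
    simp [hi, hj, hji]
    linear_combination -hs)
  have hk : P i j * P k i = P k j := by
    simpa [sub_eq_zero, mulVec_sub, mulVec_smul] using congrFun h k
  rw [← hk, norm_mul, hij, one_mul]

end PosSemidef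

end Matrix

namespace SimpleGraph
variable {G : SimpleGraph V}

lemma Walk.adj_of_odd_length
    (hG : ∀ w x y z, G.Adj w x → G.Adj y x → G.Adj y z → G.Adj w z) {u v : V}
    (p : G.Walk u v) (hp : Odd p.length) : G.Adj u v := by
  suffices ∀ {u v : V} (p : G.Walk u v),
      (Odd p.length → G.Adj u v) ∧ (Even p.length → ∀ x, G.Adj x u → G.Adj x v) from
    (this p).1 hp
  intro u v p
  induction p with
  | nil => exact ⟨fun h => absurd h (by simp), fun _ _ hx => hx⟩
  | cons h q ih =>
    rw [Walk.length_cons, Nat.odd_add_one, Nat.even_add_one, Nat.not_odd_iff_even,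
      Nat.not_even_iff_odd]
    exact ⟨fun hq => ih.2 hq _ h, fun hq x hx => hG x _ _ _ hx h.symm (ih.1 hq)⟩

lemma Coloring.adj_iff_ne (hconn : G.Preconnected) (c : G.Coloring Bool)
    (hG : ∀ w x y z, G.Adj w x → G.Adj y x → G.Adj y z → G.Adj w z) (u v : V) :
    G.Adj u v ↔ c u ≠ c v := by
  refine ⟨c.valid, fun huv => ?_⟩
  obtain ⟨p⟩ := hconn u v
  refine p.adj_of_odd_length hG ((c.odd_length_iff_not_congr p).mpr ?_)
  cases hu : c u <;> cases hv : c v <;> simp_all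

def isoCompleteBipartiteGraphOfAdjIff (c : V → Bool) (h : ∀ u v, G.Adj u v ↔ c u ≠ c v) :
    G ≃g completeBipartiteGraph {v // c v = true} {v // ¬c v = true} where
  toEquiv := (Equiv.sumCompl _).symm
  map_rel_iff' {u v} := by
    rw [h]
    by_cases hu : c u = true <;> by_cases hv : c v = true <;>
      simp [Equiv.sumCompl_symm_apply_of_pos, Equiv.sumCompl_symm_apply_of_neg, hu, hv]

lemma exists_iso_completeBipartiteGraph_fin [Fintype V] (c : V → Bool)
    (h : ∀ u v, G.Adj u v ↔ c u ≠ c v) (σ : Equiv.Perm V) (hσ : ∀ v, G.Adj v (σ v)) :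
    ∃ n, Fintype.card V = 2 * n ∧ Nonempty (G ≃g completeBipartiteGraph (Fin n) (Fin n)) := by
  have hswap (v : V) : ¬c v = true ↔ c (σ v) = true := by
    have := (h v (σ v)).mp (hσ v)
    cases hv : c v <;> cases hσv : c (σ v) <;> simp_all
  let e : {v // ¬c v = true} ≃ {v // c v = true} := σ.subtypeEquiv hswap
  refine ⟨Fintype.card {v // c v = true}, ?_, ⟨(isoCompleteBipartiteGraphOfAdjIff c h).trans
    (completeBipartiteGraphCongr (Fintype.equivFin _) (e.trans (Fintype.equivFin _)))⟩⟩
  have hsides := Fintype.card_congr e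
  rw [Fintype.card_subtype_compl] at hsides
  have hle := Fintype.card_subtype_le (fun v => c v = true)
  omega

end SimpleGraph

structure IsMatchingInvolution (G : SimpleGraph V) (σ : Equiv.Perm V) : Prop where
  involutive : Function.Involutive σ
  adj : ∀ v, σ v ≠ v → G.Adj v (σ v)

namespace IsGraphMatching
variable {G : SimpleGraph V} {M : Finset (Sym2 V)}

lemma eq_of_mk_mem (hM : IsGraphMatching G M) {v w w' : V} (h : s(v, w) ∈ M)
    (h' : s(v, w') ∈ M) : w = w' := by
  by_contra hne
  exact hM.2 _ h _ h' (fun heq => hne (Sym2.congr_right.mp heq)) v (Sym2.mem_mk_left v w)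
    (Sym2.mem_mk_left v w')

lemma card_biUnion_toFinset [DecidableEq V] (hM : IsGraphMatching G M) :
    (M.biUnion Sym2.toFinset).card = 2 * M.card := by
  rw [Finset.card_biUnion, Finset.sum_const_nat, mul_comm]
  · exact fun e he => Sym2.card_toFinset_of_not_isDiag e (G.not_isDiag_of_mem_edgeSet (hM.1 he))
  · exact fun e he f hf hne => Finset.disjoint_left.mpr fun v hve hvf =>
      hM.2 e he f hf hne v (Sym2.mem_toFinset.mp hve) (Sym2.mem_toFinset.mp hvf)

lemma exists_isMatchingInvolution [Fintype V] [DecidableEq V] (hM : IsGraphMatching G M) :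
    ∃ σ : Equiv.Perm V, IsMatchingInvolution G σ ∧
      (Finset.univ.filter fun v => σ v ≠ v).card = 2 * M.card := by
  classical
  let σ : V → V := fun v => if h : ∃ w, s(v, w) ∈ M then h.choose else v
  have hσ_of_mem {v w : V} (h : s(v, w) ∈ M) : σ v = w := by
    have hex : ∃ w, s(v, w) ∈ M := ⟨w, h⟩
    simp only [σ, dif_pos hex]
    exact hM.eq_of_mk_mem hex.choose_spec h
  have hmem {v : V} (hv : σ v ≠ v) : s(v, σ v) ∈ M := by
    by_cases hex : ∃ w, s(v, w) ∈ M
    · rw [hσ_of_mem hex.choose_spec]; exact hex.choose_spec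
    · exact absurd (dif_neg hex) hv
  have hinv : Function.Involutive σ := fun v => by
    by_cases hv : σ v = v
    · rw [hv, hv]
    · exact hσ_of_mem (Sym2.eq_swap ▸ hmem hv)
  have hsupp (v : V) : σ v ≠ v ↔ ∃ e ∈ M, v ∈ e := by
    refine ⟨fun hv => ⟨_, hmem hv, Sym2.mem_mk_left _ _⟩, ?_⟩
    rintro ⟨e, he, hve⟩ hv
    obtain ⟨w, rfl⟩ := Sym2.mem_iff_exists.mp hve
    rw [hσ_of_mem he] at hv
    exact G.not_isDiag_of_mem_edgeSet (hM.1 he) (Sym2.mk_isDiag_iff.mpr hv.symm)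
  refine ⟨hinv.toPerm σ, ⟨hinv, fun v hv => hM.1 (hmem hv)⟩, ?_⟩
  rw [← hM.card_biUnion_toFinset]
  congr 1
  ext v
  rw [Finset.mem_filter, Finset.mem_biUnion]
  simpa using hsupp v

end IsGraphMatching

lemma exists_isGraphMatching_card_eq_matchingNumber [Fintype V] [DecidableEq V]
    (G : SimpleGraph V) : ∃ M, IsGraphMatching G M ∧ M.card = matchingNumber G :=
  Nat.sSup_mem (s := {n | ∃ M, IsGraphMatching G M ∧ M.card = n})
    ⟨0, ∅, ⟨by simp, by simp⟩, rfl⟩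
    ⟨Fintype.card (Sym2 V), fun _ ⟨M, _, hM⟩ => hM ▸ Finset.card_le_univ M⟩

section GainGraph
variable {G : SimpleGraph V} {φ : V → V → ℂ}

lemma gainAdj_apply_of_adj {u v : V} (h : G.Adj u v) : gainAdj G φ u v = φ u v := if_pos h

lemma gainAdj_apply_of_not_adj {u v : V} (h : ¬G.Adj u v) : gainAdj G φ u v = 0 := if_neg h

lemma IsGain.norm_gainAdj_apply_eq_one_iff (hg : IsGain G φ) {u v : V} :
    ‖gainAdj G φ u v‖ = 1 ↔ G.Adj u v := by
  by_cases h : G.Adj u v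
  · simp only [gainAdj_apply_of_adj h, hg.unit u v h, h]
  · simp [gainAdj_apply_of_not_adj h, h]

lemma IsGain.mul_swap_eq_one (hg : IsGain G φ) {u v : V} (h : G.Adj u v) :
    φ u v * φ v u = 1 := by
  have hne : φ u v ≠ 0 := norm_ne_zero_iff.mp (by simp [hg.unit u v h])
  rw [hg.inv u v h, mul_inv_cancel₀ hne]

variable [Fintype V] [DecidableEq V] {σ : Equiv.Perm V}

/-- Its entry at `(u, σ u)` is `φ u (σ u)` if `σ u ≠ u`, and `1` if `σ u = u`; all others vanish. -/
noncomputable def matchingGainMatrix (φ : V → V → ℂ) (σ : Equiv.Perm V) : Matrix V V ℂ :=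
  σ.permMatrix ℂ * diagonal fun v => if σ v = v then 1 else φ (σ v) v

lemma matchingGainMatrix_mem_unitaryGroup (hg : IsGain G φ) (hσ : IsMatchingInvolution G σ) :
    matchingGainMatrix φ σ ∈ unitaryGroup V ℂ := by
  refine mul_mem ?_ ?_
  · rw [mem_unitaryGroup_iff', star_eq_conjTranspose, conjTranspose_permMatrix,
      ← permMatrix_mul, mul_inv_cancel, permMatrix_one]
  · rw [mem_unitaryGroup_iff', star_eq_conjTranspose, diagonal_conjTranspose,
      diagonal_mul_diagonal, ← diagonal_one]
    congr 1
    ext v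
    by_cases hv : σ v = v
    · simp [hv]
    · simp only [Pi.star_apply, hv, if_false, RCLike.star_def, RCLike.conj_mul,
        hg.unit _ _ (hσ.adj v hv).symm]
      simp

lemma gainAdj_mul_matchingGainMatrix_apply (hσ : IsMatchingInvolution G σ) (x y : V) :
    (gainAdj G φ * matchingGainMatrix φ σ) x y =
      gainAdj G φ x (σ y) * if σ y = y then 1 else φ (σ y) y := by
  rw [matchingGainMatrix, ← Matrix.mul_assoc, mul_diagonal, Equiv.Perm.permMatrix,
    PEquiv.mul_toMatrix_toPEquiv, submatrix_apply, id,
    σ.symm_apply_eq.mpr (hσ.involutive y).symm]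

lemma gainAdj_mul_matchingGainMatrix_apply_self (hg : IsGain G φ)
    (hσ : IsMatchingInvolution G σ) (v : V) :
    (gainAdj G φ * matchingGainMatrix φ σ) v v = if σ v = v then 0 else 1 := by
  rw [gainAdj_mul_matchingGainMatrix_apply hσ]
  split_ifs with hv
  · rw [hv, gainAdj_apply_of_not_adj (G.irrefl (v := v)), zero_mul]
  · rw [gainAdj_apply_of_adj (hσ.adj v hv), hg.mul_swap_eq_one (hσ.adj v hv)]

lemma trace_gainAdj_mul_matchingGainMatrix (hg : IsGain G φ) (hσ : IsMatchingInvolution G σ) :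
    (gainAdj G φ * matchingGainMatrix φ σ).trace = (Finset.univ.filter fun v => σ v ≠ v).card := by
  simp only [trace, diag_apply, gainAdj_mul_matchingGainMatrix_apply_self hg hσ,
    Finset.card_filter, Nat.cast_sum, Nat.cast_ite, Nat.cast_one, Nat.cast_zero, ite_not]

lemma norm_gainAdj_mul_matchingGainMatrix_apply (hg : IsGain G φ) (hσ : IsMatchingInvolution G σ)
    (x y : V) : ‖(gainAdj G φ * matchingGainMatrix φ σ) x (σ y)‖ = ‖gainAdj G φ x y‖ := by
  rw [gainAdj_mul_matchingGainMatrix_apply hσ, hσ.involutive, norm_mul]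
  split_ifs with hy
  · rw [norm_one, mul_one]
  · rw [hg.unit _ _ (hσ.adj y (Ne.symm hy)), mul_one]

namespace IsMatchingInvolution

lemma apply_ne_of_posSemidef (hg : IsGain G φ) (hσ : IsMatchingInvolution G σ)
    (hP : (gainAdj G φ * matchingGainMatrix φ σ).PosSemidef) {u v : V} (huv : G.Adj u v) :
    σ v ≠ v := by
  intro hv
  have h := hP.apply_eq_zero_of_diag_eq_zero
    (by rw [gainAdj_mul_matchingGainMatrix_apply_self hg hσ, if_pos hv]) u
  rw [gainAdj_mul_matchingGainMatrix_apply hσ, if_pos hv, hv, mul_one,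
    gainAdj_apply_of_adj huv] at h
  simpa [h] using hg.unit u v huv

lemma adj_of_posSemidef (hg : IsGain G φ) (hσ : IsMatchingInvolution G σ)
    (hP : (gainAdj G φ * matchingGainMatrix φ σ).PosSemidef) (hperfect : ∀ v, σ v ≠ v)
    {a b c d : V} (hab : G.Adj a b) (hcb : G.Adj c b) (hcd : G.Adj c d) : G.Adj a d := by
  have hdiag (v : V) : (gainAdj G φ * matchingGainMatrix φ σ) v v = 1 := by
    rw [gainAdj_mul_matchingGainMatrix_apply_self hg hσ, if_neg (hperfect v)]
  have hnorm (x y : V) : ‖(gainAdj G φ * matchingGainMatrix φ σ) x (σ y)‖ = 1 ↔ G.Adj x y := by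
    rw [norm_gainAdj_mul_matchingGainMatrix_apply hg hσ, hg.norm_gainAdj_apply_eq_one_iff]
  have hcols (y : V) (hcy : G.Adj c y) := hP.norm_apply_eq_of_norm_apply_eq_one (hdiag c)
    (hdiag (σ y)) ((hnorm c y).mpr hcy) a
  exact (hnorm a d).mp ((hcols d hcd).symm.trans ((hcols b hcb).trans ((hnorm a b).mpr hab)))

end IsMatchingInvolution

end GainGraph

/-- if the underlying graph is connected and bipartite with at least two
vertices, and the energy equals twice the matching number, then the underlying graph is a
regular complete bipartite graph `K_{n,n}`. -/
theorem iso_completeBipartite_of_gainEnergy_eq [Fintype V] [DecidableEq V]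
    (G : SimpleGraph V) (φ : V → V → ℂ) (hg : IsGain G φ)
    (hconn : G.Connected) (hbip : G.Colorable 2) (hcard : 2 ≤ Fintype.card V)
    (hE : gainEnergy G φ hg = 2 * (matchingNumber G : ℝ)) :
    ∃ n : ℕ, 1 ≤ n ∧ Nonempty (G ≃g completeBipartiteGraph (Fin n) (Fin n)) := by
  obtain ⟨M, hM, hMcard⟩ := exists_isGraphMatching_card_eq_matchingNumber G
  obtain ⟨σ, hσ, hσcard⟩ := hM.exists_isMatchingInvolution
  have hP : (gainAdj G φ * matchingGainMatrix φ σ).PosSemidef := by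
    refine hg.isHermitian.posSemidef_mul_of_re_trace_mul_eq
      (matchingGainMatrix_mem_unitaryGroup hg hσ) ?_
    rw [trace_gainAdj_mul_matchingGainMatrix hg hσ, hσcard, hMcard]
    exact_mod_cast hE.symm
  have : Nontrivial V := Fintype.one_lt_card_iff_nontrivial.mp hcard
  have hperfect (v : V) : σ v ≠ v := by
    obtain ⟨u, hu⟩ := G.exists_adj_iff_not_isIsolated.mpr (hconn.preconnected.not_isIsolated v)
    exact hσ.apply_ne_of_posSemidef hg hP hu.symm
  let c : G.Coloring Bool := G.recolorOfEquiv finTwoEquiv hbip.some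
  have hadj := c.adj_iff_ne hconn.preconnected fun _ _ _ _ => hσ.adj_of_posSemidef hg hP hperfect
  obtain ⟨n, hn, hiso⟩ :=
    SimpleGraph.exists_iso_completeBipartiteGraph_fin c hadj σ fun v => hσ.adj v (hperfect v)
  exact ⟨n, by omega, hiso⟩
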